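/- Let E be a complex inner product space and let x, y, z ∈ E be nonzero vectors. The Cayley distance satisfies the triangle inequality: arccos(|⟨x, z⟩| / (‖x‖ · ‖z‖)) ≤ arccos(|⟨x, y⟩| / (‖x‖ · ‖y‖)) + arccos(|⟨y, z⟩| / (‖y‖ · ‖z‖)). Together with symmetry and the vanishing characterization, this makes d_c a metric on the projective space P(E). -/

import Mathlib

open scoped InnerProductSpace

/-!
Normalise `x`, `y`, `z` to unit vectors and let `α`, `β` be the Cayley distances from `x` to `y`
and from `y` to `z`. The components `u = x - ⟪y, x⟫ y` and `v = z - ⟪y, z⟫ y` of `x` and `z`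
orthogonal to `y` have lengths `sin α` and `sin β`, and `⟪u, v⟫ = ⟪x, z⟫ - ⟪x, y⟫ ⟪y, z⟫`.
Cauchy–Schwarz for `u`, `v` then gives `|⟪x, z⟫| ≥ cos α cos β - sin α sin β = cos (α + β)`,
and applying the antitone function `arccos` yields the triangle inequality.
-/

namespace Real

theorem arccos_le_arccos_add_arccos {a b c : ℝ} (ha : -1 ≤ a) (ha' : a ≤ 1) (hb : -1 ≤ b)
    (hb' : b ≤ 1) (h : a * b - √(1 - a ^ 2) * √(1 - b ^ 2) ≤ c) :
    arccos c ≤ arccos a + arccos b := by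
  by_cases hπ : arccos a + arccos b ≤ π
  · have hcos : cos (arccos a + arccos b) = a * b - √(1 - a ^ 2) * √(1 - b ^ 2) := by
      rw [cos_add, cos_arccos ha ha', cos_arccos hb hb', sin_arccos, sin_arccos]
    calc arccos c ≤ arccos (cos (arccos a + arccos b)) := arccos_le_arccos (hcos ▸ h)
      _ = arccos a + arccos b := arccos_cos (add_nonneg (arccos_nonneg a) (arccos_nonneg b)) hπ
  · exact (arccos_le_pi c).trans (le_of_not_ge hπ)

end Real

section InnerProduct

variable {𝕜 E : Type*} [RCLike 𝕜] [NormedAddCommGroup E] [InnerProductSpace 𝕜 E]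

theorem inner_sub_inner_smul_sub_inner_smul {y : E} (hy : ‖y‖ = 1) (x z : E) :
    ⟪x - ⟪y, x⟫_𝕜 • y, z - ⟪y, z⟫_𝕜 • y⟫_𝕜 = ⟪x, z⟫_𝕜 - ⟪x, y⟫_𝕜 * ⟪y, z⟫_𝕜 := by
  have hyy : ⟪y, y⟫_𝕜 = 1 := by simp [hy]
  simp only [inner_sub_left, inner_sub_right, inner_smul_left, inner_smul_right, inner_conj_symm,
    hyy]
  ring

theorem norm_sub_inner_smul_sq {y : E} (hy : ‖y‖ = 1) (x : E) :
    ‖x - ⟪y, x⟫_𝕜 • y‖ ^ 2 = ‖x‖ ^ 2 - ‖⟪x, y⟫_𝕜‖ ^ 2 := by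
  rw [← inner_self_eq_norm_sq (𝕜 := 𝕜), inner_sub_inner_smul_sub_inner_smul hy, map_sub,
    inner_self_eq_norm_sq, ← inner_conj_symm y x, RCLike.mul_conj]
  norm_cast

theorem norm_inner_mul_norm_inner_sub_le {y : E} (hy : ‖y‖ = 1) (x z : E) :
    ‖⟪x, y⟫_𝕜‖ * ‖⟪y, z⟫_𝕜‖ - √(‖x‖ ^ 2 - ‖⟪x, y⟫_𝕜‖ ^ 2) * √(‖z‖ ^ 2 - ‖⟪y, z⟫_𝕜‖ ^ 2) ≤
      ‖⟪x, z⟫_𝕜‖ := by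
  set u := x - ⟪y, x⟫_𝕜 • y
  set v := z - ⟪y, z⟫_𝕜 • y
  have hu : √(‖x‖ ^ 2 - ‖⟪x, y⟫_𝕜‖ ^ 2) = ‖u‖ := by
    rw [← norm_sub_inner_smul_sq hy, Real.sqrt_sq (norm_nonneg _)]
  have hv : √(‖z‖ ^ 2 - ‖⟪y, z⟫_𝕜‖ ^ 2) = ‖v‖ := by
    rw [← norm_inner_symm z y, ← norm_sub_inner_smul_sq hy, Real.sqrt_sq (norm_nonneg _)]
  calc ‖⟪x, y⟫_𝕜‖ * ‖⟪y, z⟫_𝕜‖ - √(‖x‖ ^ 2 - ‖⟪x, y⟫_𝕜‖ ^ 2) * √(‖z‖ ^ 2 - ‖⟪y, z⟫_𝕜‖ ^ 2)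
      ≤ ‖⟪x, y⟫_𝕜 * ⟪y, z⟫_𝕜‖ - ‖⟪u, v⟫_𝕜‖ := by
        rw [hu, hv, norm_mul]
        gcongr
        exact norm_inner_le_norm u v
    _ = ‖⟪x, y⟫_𝕜 * ⟪y, z⟫_𝕜‖ - ‖⟪x, z⟫_𝕜 - ⟪x, y⟫_𝕜 * ⟪y, z⟫_𝕜‖ := by
        rw [inner_sub_inner_smul_sub_inner_smul hy]
    _ ≤ ‖⟪x, z⟫_𝕜‖ := by
        linarith [norm_sub_norm_le (⟪x, y⟫_𝕜 * ⟪y, z⟫_𝕜) ⟪x, z⟫_𝕜,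
          norm_sub_rev (⟪x, y⟫_𝕜 * ⟪y, z⟫_𝕜) ⟪x, z⟫_𝕜]

theorem arccos_norm_inner_le_add_of_norm_eq_one {x y z : E} (hx : ‖x‖ = 1) (hy : ‖y‖ = 1)
    (hz : ‖z‖ = 1) :
    Real.arccos ‖⟪x, z⟫_𝕜‖ ≤ Real.arccos ‖⟪x, y⟫_𝕜‖ + Real.arccos ‖⟪y, z⟫_𝕜‖ := by
  have hle : ∀ {p q : E}, ‖p‖ = 1 → ‖q‖ = 1 → ‖⟪p, q⟫_𝕜‖ ≤ 1 := fun {p q} hp hq => by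
    simpa [hp, hq] using norm_inner_le_norm (𝕜 := 𝕜) p q
  refine Real.arccos_le_arccos_add_arccos (by linarith [norm_nonneg ⟪x, y⟫_𝕜]) (hle hx hy)
    (by linarith [norm_nonneg ⟪y, z⟫_𝕜]) (hle hy hz) ?_
  simpa [hx, hz] using norm_inner_mul_norm_inner_sub_le (𝕜 := 𝕜) hy x z

theorem norm_inner_inv_norm_smul_inv_norm_smul (x z : E) :
    ‖⟪(‖x‖⁻¹ : 𝕜) • x, (‖z‖⁻¹ : 𝕜) • z⟫_𝕜‖ = ‖⟪x, z⟫_𝕜‖ / (‖x‖ * ‖z‖) := by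
  simp only [inner_smul_left, inner_smul_right, norm_mul, RCLike.norm_conj, norm_inv,
    RCLike.norm_ofReal, abs_norm]
  ring

end InnerProduct

/-- The Cayley distance satisfies the triangle inequality on nonzero vectors
(and hence, together with symmetry and the vanishing characterization, defines
a metric on the projective space `P(E)`). -/
theorem cayley_distance_triangle
    {E : Type*} [NormedAddCommGroup E] [InnerProductSpace ℂ E]
    (x y z : E) (hx : x ≠ 0) (hy : y ≠ 0) (hz : z ≠ 0) :
    Real.arccos (‖⟪x, z⟫_ℂ‖ / (‖x‖ * ‖z‖)) ≤
      Real.arccos (‖⟪x, y⟫_ℂ‖ / (‖x‖ * ‖y‖)) +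
        Real.arccos (‖⟪y, z⟫_ℂ‖ / (‖y‖ * ‖z‖)) := by
  have key := arccos_norm_inner_le_add_of_norm_eq_one (𝕜 := ℂ) (norm_smul_inv_norm (𝕜 := ℂ) hx)
    (norm_smul_inv_norm (𝕜 := ℂ) hy) (norm_smul_inv_norm (𝕜 := ℂ) hz)
  rwa [norm_inner_inv_norm_smul_inv_norm_smul, norm_inner_inv_norm_smul_inv_norm_smul,
    norm_inner_inv_norm_smul_inv_norm_smul] at key
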